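/- arXiv:2308.07914 — 2 statements merged into one kernel-verified Lean document; each statement's English description precedes it below -/
import Mathlib

section
/- For even n, Σ_{k even, 0≤k≤n} C(n,k) k!(n-k)!/(k!!(n-k)!!) = 2^{n/2} n!/n!!. -/
lemma even_sum_reindex (m : ℕ) (f : ℕ → ℚ) :
    ∑ k ∈ Finset.range (2 * m + 1), (if Even k then f k else 0)
      = ∑ j ∈ Finset.range (m + 1), f (2 * j) := by
  induction m with
  | zero => simp
  | succ m ih =>
    have h2 : 2 * (m + 1) + 1 = (2 * m + 1) + 1 + 1 := by ring
    rw [h2, Finset.sum_range_succ, Finset.sum_range_succ, ih, Finset.sum_range_succ]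
    have hodd : ¬ Even (2 * m + 1) := by simp [parity_simps]
    have heven : Even (2 * m + 1 + 1) := by
      refine ⟨m + 1, by ring⟩
    rw [Finset.sum_range_succ]
    simp only [hodd, heven, if_true, if_false, add_zero]
    have : 2 * (m + 1) = 2 * m + 1 + 1 := by ring
    rw [this, Finset.sum_range_succ]

/-- For even `n`,
`∑_{k even, 0 ≤ k ≤ n} C(n,k) · k!(n-k)! / (k!!(n-k)!!) = 2^{n/2} · n!/n!!`. -/
theorem stmt2 (n : ℕ) (hn : Even n) :
    ∑ k ∈ Finset.range (n + 1),
      (if Even k then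
        (n.choose k : ℚ) * (k.factorial : ℚ) * ((n - k).factorial : ℚ) /
          ((k.doubleFactorial : ℚ) * ((n - k).doubleFactorial : ℚ))
       else 0)
      = 2 ^ (n / 2) * (n.factorial : ℚ) / (n.doubleFactorial : ℚ) := by
  obtain ⟨m, rfl⟩ := hn
  have hmm : m + m = 2 * m := by ring
  rw [hmm]
  rw [even_sum_reindex]
  have key : ∀ j ∈ Finset.range (m + 1),
      ((2 * m).choose (2 * j) : ℚ) * ((2 * j).factorial : ℚ)
        * ((2 * m - 2 * j).factorial : ℚ) /
        (((2 * j).doubleFactorial : ℚ) * ((2 * m - 2 * j).doubleFactorial : ℚ))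
      = ((2 * m).factorial : ℚ) / (2 ^ m * (m.factorial : ℚ)) * (m.choose j : ℚ) := by
    intro j hj
    rw [Finset.mem_range] at hj
    have hjm : j ≤ m := Nat.lt_succ_iff.mp hj
    have hsub : 2 * m - 2 * j = 2 * (m - j) := by omega
    have hnum : ((2 * m).choose (2 * j) : ℚ) * ((2 * j).factorial : ℚ)
        * ((2 * m - 2 * j).factorial : ℚ) = ((2 * m).factorial : ℚ) := by
      have := Nat.choose_mul_factorial_mul_factorial
        (show 2 * j ≤ 2 * m by omega)
      exact_mod_cast this
    rw [hnum, hsub, Nat.doubleFactorial_two_mul, Nat.doubleFactorial_two_mul]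
    have hfm : ((m.factorial : ℚ)) = (m.choose j : ℚ) * j.factorial * (m - j).factorial := by
      exact_mod_cast (Nat.choose_mul_factorial_mul_factorial hjm).symm
    have h2 : (2 : ℚ) ^ j * 2 ^ (m - j) = 2 ^ m := by
      rw [← pow_add]; congr 1; omega
    push_cast
    rw [hfm, ← h2]
    have hj0 : (j.factorial : ℚ) ≠ 0 := by positivity
    have hmj0 : ((m - j).factorial : ℚ) ≠ 0 := by positivity
    have hc0 : (m.choose j : ℚ) ≠ 0 := by
      exact_mod_cast (Nat.choose_pos hjm).ne'
    field_simp
  rw [Finset.sum_congr rfl key, ← Finset.mul_sum]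
  have hsum : ∑ j ∈ Finset.range (m + 1), (m.choose j : ℚ) = 2 ^ m := by
    exact_mod_cast congrArg (Nat.cast : ℕ → ℚ) (Nat.sum_range_choose m)
  rw [hsum]
  have : (2 * m) / 2 = m := by omega
  rw [this, Nat.doubleFactorial_two_mul]
  push_cast
  have hm0 : (m.factorial : ℚ) ≠ 0 := by positivity
  field_simp
end

section
/- The n-th derivative at zero of the Gaussian g(θ) = exp(-θ²/(2σ²)) equals (-1)^{n/2} (n!/n!!) σ^{-n} for even n, and 0 for odd n. -/
/-!
Rescaling `θ = σ y` reduces the claim to the standard Gaussian `exp (-y²/2)`, whose `n`-th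
derivative is `(-1)ⁿ Heₙ(y) exp (-y²/2)` with `Heₙ` the probabilists' Hermite polynomial.
At `0` this is the constant coefficient of `Heₙ`, namely `(-1)^{n/2} (n-1)!!` for even `n`
and `0` for odd `n`; finally `n! = n!! (n-1)!!`.
-/

open Polynomial Nat

theorem Nat.factorial_eq_doubleFactorial_mul_doubleFactorial_sub_one (n : ℕ) :
    n ! = n‼ * (n - 1)‼ := by
  cases n with
  | zero => rfl
  | succ m => exact factorial_eq_mul_doubleFactorial m

theorem Polynomial.coeff_hermite_zero (n : ℕ) :
    coeff (hermite n) 0 = if Even n then (-1 : ℤ) ^ (n / 2) * (n - 1)‼ else 0 := by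
  simp [coeff_hermite]

theorem iteratedDeriv_gaussian_zero (n : ℕ) :
    iteratedDeriv n (fun y : ℝ => Real.exp (-(y ^ 2 / 2))) 0 =
      if Even n then (-1 : ℝ) ^ (n / 2) * (n - 1)‼ else 0 := by
  rw [iteratedDeriv_eq_iterate, deriv_gaussian_eq_hermite_mul_gaussian,
    ← coeff_zero_eq_aeval_zero', coeff_hermite_zero]
  split_ifs with hn
  · simp [hn.neg_one_pow]
  · simp

theorem stmt3_general (σ : ℝ) (n : ℕ) :
    iteratedDeriv n (fun θ : ℝ => Real.exp (-θ ^ 2 / (2 * σ ^ 2))) 0 =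
      if Even n then
        (-1) ^ (n / 2) * ((n.factorial : ℝ) / (n.doubleFactorial : ℝ)) / σ ^ n
      else 0 := by
  have hrescale : (fun θ : ℝ => Real.exp (-θ ^ 2 / (2 * σ ^ 2))) =
      fun θ => (fun y : ℝ => Real.exp (-(y ^ 2 / 2))) (σ⁻¹ * θ) := by
    funext θ
    ring_nf
  have hsmooth : ContDiff ℝ n (fun y : ℝ => Real.exp (-(y ^ 2 / 2))) := by fun_prop
  have hfactorial : (n ! : ℝ) / n‼ = (n - 1)‼ := by
    rw [factorial_eq_doubleFactorial_mul_doubleFactorial_sub_one, cast_mul,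
      mul_div_cancel_left₀ _ (cast_ne_zero.2 (doubleFactorial_pos n).ne')]
  rw [hrescale, iteratedDeriv_comp_const_mul hsmooth]
  beta_reduce
  rw [mul_zero, iteratedDeriv_gaussian_zero, hfactorial]
  split_ifs <;> simp [div_eq_mul_inv, mul_comm]

/-- The `n`-th derivative at `0` of the Gaussian `exp (-θ²/(2σ²))` equals
`(-1)^{n/2} (n!/n!!) σ^{-n}` for even `n`, and `0` for odd `n`. -/
theorem stmt3 (σ : ℝ) (hσ : 0 < σ) (n : ℕ) :
    iteratedDeriv n (fun θ : ℝ => Real.exp (-θ ^ 2 / (2 * σ ^ 2))) 0 =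
      if Even n then
        (-1) ^ (n / 2) * ((n.factorial : ℝ) / (n.doubleFactorial : ℝ)) / σ ^ n
      else 0 :=
  stmt3_general σ n
end
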